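/- Let G be a finite group with 1 ∈ CD(G). If G = AB where A and B are abelian subgroups of G, then G is the trivial group. -/

import Mathlib

/-!
If `1 ∈ CD(G)` then `m*(G) = |G|`, so `m(Z(G)) = |G| |Z(G)|` forces `Z(G) = 1` and then
`m(G) = m(1)`, i.e. `G ∈ CD(G)`. It therefore suffices to show that a finite group `G = AB` with
`A`, `B` abelian and `G ∈ CD(G)` is nilpotent, since a nontrivial nilpotent group has a nontrivial
centre.

Enlarge `A` and `B` by `Z(G)`. Then `|A| |B| = |G| |A ∩ B| ≥ |G| |Z(G)| = m*(G)`, and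
`A ≤ C(A)`, `B ≤ C(B)` give `|A|² ≤ m(A) ≤ m*(G)` and likewise for `B`; hence `|A| = |B|` and
`A, B ∈ CD(G)`. `CD(G)` is closed under joins, which are then just the products, and under
conjugation; so a maximal proper member `N ⊇ A` is normal: `N ⊔ Nᵍ` is a member, and
`G = N Nᵍ` would force `g ∈ N`. A member `N` of `CD(G)` satisfies `N ∈ CD(N)`, so by induction on
`|G|` both `N` and a similar `M ⊇ B` are nilpotent, and `G = NM` is nilpotent by Fitting's theorem.
-/

open Pointwise

/-- The Chermak-Delgado measure of a subgroup: `m_G(H) = |H| * |C_G(H)|`. -/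
noncomputable def cdMeasure {G : Type*} [Group G] (H : Subgroup G) : Nat :=
  Nat.card H * Nat.card (Subgroup.centralizer (H : Set G))

/-- The Chermak-Delgado lattice of `G`: the subgroups of maximal Chermak-Delgado measure. -/
def CD (G : Type*) [Group G] : Set (Subgroup G) :=
  {H | ∀ K : Subgroup G, cdMeasure K ≤ cdMeasure H}

lemma Nat.eq_of_mul_eq_mul_self_of_le {x y m : ℕ} (hx : x ≤ m) (hy : y ≤ m)
    (h : x * y = m * m) : x = m := by
  nlinarith

namespace Subgroup

variable {G : Type*} [Group G]

lemma card_subgroupOf (H K : Subgroup G) :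
    Nat.card (K.subgroupOf H) = Nat.card (H ⊓ K : Subgroup G) := by
  rw [← inf_subgroupOf_right, inf_comm]
  exact Nat.card_congr (subgroupOfEquivOfLe inf_le_left).toEquiv

theorem card_mul_mul_card_inf (H K : Subgroup G) :
    Nat.card ((H : Set G) * (K : Set G) : Set G) * Nat.card (H ⊓ K : Subgroup G) =
      Nat.card H * Nat.card K := by
  -- orbit-stabilizer for `H` acting on `G ⧸ K`, at the trivial coset
  have h_orbit : MulAction.orbit H ((1 : G) : G ⧸ K) = QuotientGroup.mk '' (H : Set G) := by
    ext x
    change (∃ h : H, ((h * 1 : G) : G ⧸ K) = x) ↔ _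
    simp
  have h_stab : MulAction.stabilizer H ((1 : G) : G ⧸ K) = K.subgroupOf H := by
    ext h
    change ((h * 1 : G) : G ⧸ K) = ((1 : G) : G ⧸ K) ↔ _
    simp [QuotientGroup.eq, mem_subgroupOf]
  have h_index := MulAction.index_stabilizer H ((1 : G) : G ⧸ K)
  rw [h_stab, h_orbit, ← Nat.card_coe_set_eq] at h_index
  rw [card_mul_eq_card_subgroup_mul_card_quotient, ← h_index, ← card_subgroupOf,
    ← (K.subgroupOf H).card_mul_index]
  ring

lemma mul_eq_univ_symm {A B : Subgroup G} (h : (A : Set G) * (B : Set G) = Set.univ) :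
    (B : Set G) * (A : Set G) = Set.univ := by
  refine Set.eq_univ_of_forall fun x => ?_
  obtain ⟨a, ha, b, hb, hab⟩ := h.symm ▸ Set.mem_univ x⁻¹
  exact ⟨b⁻¹, inv_mem hb, a⁻¹, inv_mem ha, by simp only at hab ⊢; rw [← mul_inv_rev, hab, inv_inv]⟩

lemma subgroupOf_mul_subgroupOf_eq_univ {A B N : Subgroup G}
    (hAB : (A : Set G) * (B : Set G) = Set.univ) (hAN : A ≤ N) :
    (A.subgroupOf N : Set N) * (B.subgroupOf N : Set N) = Set.univ := by
  refine Set.eq_univ_of_forall fun x => ?_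
  obtain ⟨a, ha, b, hb, hab⟩ := hAB.symm ▸ Set.mem_univ (x : G)
  have hbN : b ∈ N := by
    rw [show b = a⁻¹ * x by rw [← hab]; group]
    exact mul_mem (inv_mem (hAN ha)) x.2
  exact ⟨⟨a, hAN ha⟩, ha, ⟨b, hbN⟩, hb, Subtype.ext hab⟩

lemma mem_of_mul_map_conj_eq_univ {N : Subgroup G} {g : G}
    (h : (N : Set G) * (N.map (MulAut.conj g).toMonoidHom : Set G) = Set.univ) : g ∈ N := by
  obtain ⟨n, hn, _, ⟨m, hm, rfl⟩, hnm⟩ := h.symm ▸ Set.mem_univ g⁻¹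
  have hg : g = n⁻¹ * m⁻¹ := by
    simp only [MulEquiv.toMonoidHom_eq_coe, MonoidHom.coe_coe, MulAut.conj_apply] at hnm
    calc g = n⁻¹ * (n * (g * m * g⁻¹))⁻¹⁻¹ * g * m⁻¹ := by group
      _ = n⁻¹ * m⁻¹ := by rw [hnm]; group
  rw [hg]
  exact mul_mem (inv_mem hn) (inv_mem hm)

lemma centralizer_sup (H K : Subgroup G) :
    centralizer ((H ⊔ K : Subgroup G) : Set G) =
      centralizer (H : Set G) ⊓ centralizer (K : Set G) := by
  rw [← closure_eq H, ← closure_eq K, ← closure_union, centralizer_closure, closure_eq, closure_eq]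
  ext x
  simp [mem_centralizer_iff, or_imp, forall_and]

lemma centralizer_map_mulEquiv {G' : Type*} [Group G'] (e : G ≃* G') (H : Subgroup G) :
    centralizer (H.map e.toMonoidHom : Set G') = (centralizer (H : Set G)).map e.toMonoidHom := by
  ext x
  obtain ⟨y, rfl⟩ := e.surjective x
  simp [mem_centralizer_iff, ← map_mul]

lemma map_subtype_centralizer (M : Subgroup G) (H : Subgroup M) :
    (centralizer (H : Set M)).map M.subtype = centralizer (H.map M.subtype : Set G) ⊓ M := by
  ext x
  constructor
  · rintro ⟨y, hy, rfl⟩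
    refine ⟨?_, y.2⟩
    rintro _ ⟨h, hh, rfl⟩
    exact congrArg Subtype.val (hy h hh)
  · rintro ⟨hx, hxM⟩
    exact ⟨⟨x, hxM⟩, fun h hh => Subtype.ext (hx _ ⟨h, hh, rfl⟩), rfl⟩

lemma subgroupOf_le_centralizer {A N : Subgroup G} (hA : A ≤ centralizer (A : Set G)) :
    A.subgroupOf N ≤ centralizer (A.subgroupOf N : Set N) :=
  fun _ hx y hy => Subtype.ext (hA hx y hy)

lemma sup_center_le_centralizer {A : Subgroup G} (hA : A ≤ centralizer (A : Set G)) :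
    A ⊔ center G ≤ centralizer ((A ⊔ center G : Subgroup G) : Set G) := by
  rw [centralizer_sup, centralizer_center, inf_top_eq]
  exact sup_le hA (center_le_centralizer _)

lemma commutator_top_le_iff {L N : Subgroup G} [N.Normal] :
    ⁅L, ⊤⁆ ≤ N ↔ L ≤ N.upperCentralSeriesStep := by
  rw [commutator_le]
  exact ⟨fun h x hx y => h x hx y (mem_top y), fun h x hx y _ => h hx y⟩

lemma commutator_sup_le {L H K : Subgroup G} [L.Normal] [K.Normal] :
    ⁅L, H ⊔ K⁆ ≤ ⁅L, H⁆ ⊔ ⁅L, K⁆ := by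
  rw [commutator_le]
  intro x hx g hg
  rw [← SetLike.mem_coe, mul_normal] at hg
  obtain ⟨h, hh, k, hk, rfl⟩ := hg
  rw [commutatorElement_mul_right_eq_mul_conj, mul_assoc (_ * h), mul_assoc, ← mul_assoc h]
  exact mul_mem (mem_sup_left (commutator_mem_commutator hx hh))
    (mem_sup_right ((commutator_normal L K).conj_mem _ (commutator_mem_commutator hx hk) h))

/-- Starting at `⊤` makes `⁅H.shiftedLowerCentralSeries n, H⁆ ≤ H.shiftedLowerCentralSeries (n + 1)`
hold for every `n`, including `n = 0`. -/
def shiftedLowerCentralSeries (H : Subgroup G) : ℕ → Subgroup G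
  | 0 => ⊤
  | n + 1 => H.lowerCentralSeries n

@[simp]
lemma shiftedLowerCentralSeries_zero (H : Subgroup G) : H.shiftedLowerCentralSeries 0 = ⊤ := rfl

variable {H K : Subgroup G}

instance shiftedLowerCentralSeries_normal [H.Normal] (n : ℕ) :
    (H.shiftedLowerCentralSeries n).Normal := by
  cases n <;> unfold shiftedLowerCentralSeries <;> infer_instance

lemma commutator_shiftedLowerCentralSeries_le [H.Normal] (n : ℕ) :
    ⁅H.shiftedLowerCentralSeries n, H⁆ ≤ H.shiftedLowerCentralSeries (n + 1) := by
  cases n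
  · exact commutator_le_right _ _
  · exact le_rfl

lemma shiftedLowerCentralSeries_eq_bot {c n : ℕ} (hc : H.lowerCentralSeries c = ⊥) (hn : c < n) :
    H.shiftedLowerCentralSeries n = ⊥ := by
  obtain ⟨m, rfl⟩ := Nat.exists_eq_add_of_lt hn
  exact eq_bot_iff.mpr (hc ▸ H.lowerCentralSeries_antitone (by omega))

def fittingSeries (H K : Subgroup G) (n : ℕ) : Subgroup G :=
  ⨆ p : {p : ℕ × ℕ // p.1 + p.2 = n},
    H.shiftedLowerCentralSeries p.1.1 ⊓ K.shiftedLowerCentralSeries p.1.2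

instance fittingSeries_normal [H.Normal] [K.Normal] (n : ℕ) : (fittingSeries H K n).Normal := by
  unfold fittingSeries
  infer_instance

lemma le_fittingSeries {i j n : ℕ} (h : i + j = n) :
    H.shiftedLowerCentralSeries i ⊓ K.shiftedLowerCentralSeries j ≤ fittingSeries H K n :=
  le_iSup_of_le (⟨(i, j), h⟩ : {p : ℕ × ℕ // p.1 + p.2 = n}) le_rfl

lemma commutator_fittingSeries_le [H.Normal] [K.Normal] (hHK : H ⊔ K = ⊤) (n : ℕ) :
    ⁅fittingSeries H K n, ⊤⁆ ≤ fittingSeries H K (n + 1) := by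
  rw [commutator_top_le_iff, fittingSeries, iSup_le_iff]
  rintro ⟨⟨i, j⟩, hij⟩
  rw [← commutator_top_le_iff, ← hHK]
  refine commutator_sup_le.trans (sup_le ?_ ?_)
  · refine le_trans (le_inf ?_ ?_) (le_fittingSeries (i := i + 1) (j := j) (by omega))
    · exact (commutator_mono inf_le_left le_rfl).trans (commutator_shiftedLowerCentralSeries_le i)
    · exact (commutator_mono inf_le_right le_rfl).trans (commutator_le_left _ _)
  · refine le_trans (le_inf ?_ ?_) (le_fittingSeries (i := i) (j := j + 1) (by omega))
    · exact (commutator_mono inf_le_left le_rfl).trans (commutator_le_left _ _)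
    · exact (commutator_mono inf_le_right le_rfl).trans (commutator_shiftedLowerCentralSeries_le j)

lemma isDescendingCentralSeries_fittingSeries [H.Normal] [K.Normal] (hHK : H ⊔ K = ⊤) :
    IsDescendingCentralSeries (fittingSeries H K) := by
  refine ⟨eq_top_iff.mpr ?_, fun x n hx g => ?_⟩
  · simpa using le_fittingSeries (H := H) (K := K) (i := 0) (j := 0) (n := 0) rfl
  · exact commutator_fittingSeries_le hHK n (commutator_mem_commutator hx (mem_top g))

lemma fittingSeries_eq_bot {c d : ℕ} (hc : H.lowerCentralSeries c = ⊥)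
    (hd : K.lowerCentralSeries d = ⊥) : fittingSeries H K (c + d + 1) = ⊥ := by
  refine eq_bot_iff.mpr (iSup_le ?_)
  rintro ⟨⟨i, j⟩, hij : i + j = c + d + 1⟩
  change H.shiftedLowerCentralSeries i ⊓ K.shiftedLowerCentralSeries j ≤ ⊥
  rcases Nat.lt_or_ge c i with hi | hi
  · exact inf_le_left.trans (shiftedLowerCentralSeries_eq_bot hc hi).le
  · exact inf_le_right.trans (shiftedLowerCentralSeries_eq_bot hd (by omega)).le

/-- Fitting's theorem. -/
theorem isNilpotent_of_sup_eq_top [H.Normal] [K.Normal] (hH : Group.IsNilpotent H)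
    (hK : Group.IsNilpotent K) (hHK : H ⊔ K = ⊤) : Group.IsNilpotent G := by
  obtain ⟨c, hc⟩ := (isNilpotent_iff_lowerCentralSeries H).mp hH
  obtain ⟨d, hd⟩ := (isNilpotent_iff_lowerCentralSeries K).mp hK
  exact (nilpotent_iff_finite_descending_central_series G).mpr
    ⟨c + d + 1, fittingSeries H K, isDescendingCentralSeries_fittingSeries hHK,
      fittingSeries_eq_bot hc hd⟩

end Subgroup

open Subgroup

section CD

variable {G : Type*} [Group G]

lemma cdMeasure_map_mulEquiv {G' : Type*} [Group G'] (e : G ≃* G') (H : Subgroup G) :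
    cdMeasure (H.map e.toMonoidHom) = cdMeasure H := by
  rw [cdMeasure, cdMeasure, centralizer_map_mulEquiv, card_map_of_injective e.injective,
    card_map_of_injective e.injective]

lemma cdMeasure_bot : cdMeasure (⊥ : Subgroup G) = Nat.card G := by
  rw [cdMeasure, card_bot, one_mul, centralizer_eq_top_iff_subset.mpr (by simp), card_top]

lemma cdMeasure_top : cdMeasure (⊤ : Subgroup G) = Nat.card G * Nat.card (center G) := by
  rw [cdMeasure, card_top, coe_top, centralizer_univ]

lemma cdMeasure_subgroup (M : Subgroup G) (H : Subgroup M) :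
    cdMeasure H = Nat.card (H.map M.subtype) *
      Nat.card (centralizer (H.map M.subtype : Set G) ⊓ M : Subgroup G) := by
  rw [cdMeasure, ← map_subtype_centralizer, card_subtype, card_subtype]

variable [Finite G]

theorem sup_mem_CD {H K : Subgroup G} (hH : H ∈ CD G) (hK : K ∈ CD G) :
    H ⊔ K ∈ CD G ∧ ((H ⊔ K : Subgroup G) : Set G) = (H : Set G) * (K : Set G) := by
  have h_subset : (H : Set G) * (K : Set G) ⊆ ((H ⊔ K : Subgroup G) : Set G) :=
    mul_subset (SetLike.coe_subset_coe.mpr le_sup_left) (SetLike.coe_subset_coe.mpr le_sup_right)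
  have h_sup : Nat.card ((H : Set G) * (K : Set G) : Set G) ≤ Nat.card (H ⊔ K : Subgroup G) :=
    Nat.card_mono (Set.toFinite _) h_subset
  have h_inf : Nat.card (centralizer (H : Set G) * centralizer (K : Set G) : Set G) ≤
      Nat.card (centralizer ((H ⊓ K : Subgroup G) : Set G)) :=
    Nat.card_mono (Set.toFinite _) (mul_subset (centralizer_le (SetLike.coe_subset_coe.mpr
      inf_le_left)) (centralizer_le (SetLike.coe_subset_coe.mpr inf_le_right)))
  have h_cprod := card_mul_mul_card_inf (centralizer (H : Set G)) (centralizer K)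
  rw [← centralizer_sup] at h_cprod
  -- `m(H) m(K)` splits into two factors bounded by `m(H ⊔ K)` and `m(H ⊓ K)`
  have h_key : (Nat.card ((H : Set G) * (K : Set G) : Set G) *
        Nat.card (centralizer ((H ⊔ K : Subgroup G) : Set G))) *
      (Nat.card (H ⊓ K : Subgroup G) *
        Nat.card (centralizer (H : Set G) * centralizer (K : Set G) : Set G)) =
      cdMeasure H * cdMeasure H := by
    calc _ = (Nat.card ((H : Set G) * (K : Set G) : Set G) * Nat.card (H ⊓ K : Subgroup G)) *
          (Nat.card (centralizer (H : Set G) * centralizer (K : Set G) : Set G) *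
            Nat.card (centralizer ((H ⊔ K : Subgroup G) : Set G))) := by ring
      _ = cdMeasure H * cdMeasure K := by
        rw [card_mul_mul_card_inf, h_cprod, cdMeasure, cdMeasure]; ring
      _ = cdMeasure H * cdMeasure H := by rw [le_antisymm (hH K) (hK H)]
  have h_join : Nat.card ((H : Set G) * (K : Set G) : Set G) *
      Nat.card (centralizer ((H ⊔ K : Subgroup G) : Set G)) = cdMeasure H :=
    Nat.eq_of_mul_eq_mul_self_of_le ((Nat.mul_le_mul_right _ h_sup).trans (hH _))
      ((Nat.mul_le_mul_left _ h_inf).trans (hH _)) h_key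
  have h_card : Nat.card ((H : Set G) * (K : Set G) : Set G) = Nat.card (H ⊔ K : Subgroup G) := by
    refine le_antisymm h_sup (Nat.le_of_mul_le_mul_right ?_
      (Nat.card_pos (α := centralizer ((H ⊔ K : Subgroup G) : Set G))))
    rw [h_join]
    exact hH _
  have h_meas : cdMeasure (H ⊔ K) = cdMeasure H := by rw [cdMeasure, ← h_card, h_join]
  refine ⟨fun L => h_meas ▸ hH L, (Set.eq_of_subset_of_ncard_le h_subset ?_).symm⟩
  rw [← Nat.card_coe_set_eq, ← Nat.card_coe_set_eq, h_card]
  rfl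

theorem exists_normal_mem_CD_of_le {A : Subgroup G} (hA : A ∈ CD G) (hA_top : A ≠ ⊤) :
    ∃ N : Subgroup G, N.Normal ∧ A ≤ N ∧ N ≠ ⊤ ∧ N ∈ CD G := by
  obtain ⟨N, hAN, hN_max⟩ :=
    (Set.toFinite {L : Subgroup G | L ∈ CD G ∧ L ≠ ⊤}).exists_le_maximal ⟨hA, hA_top⟩
  obtain ⟨hN, hN_top⟩ := hN_max.prop
  refine ⟨N, ⟨fun n hn g => ?_⟩, hAN, hN_top, hN⟩
  set K := N.map (MulAut.conj g).toMonoidHom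
  have hK : K ∈ CD G := fun L => (cdMeasure_map_mulEquiv (MulAut.conj g) N).symm ▸ hN L
  obtain ⟨hNK, hNK_eq⟩ := sup_mem_CD hN hK
  by_cases hNK_top : N ⊔ K = ⊤
  · have hg := mem_of_mul_map_conj_eq_univ (hNK_eq ▸ hNK_top ▸ coe_top)
    exact mul_mem (mul_mem hg hn) (inv_mem hg)
  · exact hN_max.2 ⟨hNK, hNK_top⟩ le_sup_left (mem_sup_right ⟨n, hn, rfl⟩)

lemma card_mul_card_centralizer_inf_le {M H : Subgroup G} (hM : M ∈ CD G) (hHM : H ≤ M) :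
    Nat.card H * Nat.card (centralizer (H : Set G) ⊓ M : Subgroup G) ≤
      Nat.card M * Nat.card (centralizer (M : Set G) ⊓ M : Subgroup G) := by
  set X := centralizer (H : Set G) ⊓ M
  set Y := centralizer (M : Set G)
  have h_mul : Nat.card ((X : Set G) * (Y : Set G) : Set G) ≤
      Nat.card (centralizer (H : Set G)) :=
    Nat.card_mono (Set.toFinite _) (mul_subset (SetLike.coe_subset_coe.mpr inf_le_left)
      (centralizer_le (SetLike.coe_subset_coe.mpr hHM)))
  have h_inf : Nat.card (X ⊓ Y : Subgroup G) ≤ Nat.card (Y ⊓ M : Subgroup G) :=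
    card_le_of_le (le_inf inf_le_right (inf_le_left.trans inf_le_right))
  refine Nat.le_of_mul_le_mul_right ?_ (Nat.card_pos (α := Y))
  calc Nat.card H * Nat.card X * Nat.card Y
      = Nat.card H * (Nat.card ((X : Set G) * (Y : Set G) : Set G) *
          Nat.card (X ⊓ Y : Subgroup G)) := by
        rw [card_mul_mul_card_inf]; ring
    _ ≤ Nat.card H * Nat.card (centralizer (H : Set G)) * Nat.card (Y ⊓ M : Subgroup G) := by
        rw [← mul_assoc]; exact Nat.mul_le_mul (Nat.mul_le_mul_left _ h_mul) h_inf
    _ ≤ Nat.card M * Nat.card Y * Nat.card (Y ⊓ M : Subgroup G) :=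
        Nat.mul_le_mul_right _ (hM H)
    _ = Nat.card M * Nat.card (Y ⊓ M : Subgroup G) * Nat.card Y := by ring

theorem top_mem_CD_of_mem_CD {M : Subgroup G} (hM : M ∈ CD G) : (⊤ : Subgroup M) ∈ CD M := by
  intro H
  rw [cdMeasure_subgroup, cdMeasure_subgroup, ← MonoidHom.range_eq_map, range_subtype]
  exact card_mul_card_centralizer_inf_le hM (map_subtype_le H)

theorem mem_CD_of_mul_eq_univ (hG : (⊤ : Subgroup G) ∈ CD G) {A B : Subgroup G}
    (hA : A ≤ centralizer (A : Set G)) (hB : B ≤ centralizer (B : Set G))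
    (hZA : center G ≤ A) (hZB : center G ≤ B) (hAB : (A : Set G) * (B : Set G) = Set.univ) :
    A ∈ CD G := by
  have h_prod := card_mul_mul_card_inf A B
  rw [hAB, Nat.card_univ] at h_prod
  have hZ : Nat.card G * Nat.card (center G) ≤ Nat.card A * Nat.card B :=
    h_prod ▸ Nat.mul_le_mul_left _ (card_le_of_le (le_inf hZA hZB))
  have hmA : Nat.card A * Nat.card A ≤ Nat.card A * Nat.card B :=
    calc _ ≤ cdMeasure A := Nat.mul_le_mul_left _ (card_le_of_le hA)
      _ ≤ _ := cdMeasure_top (G := G) ▸ hG A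
      _ ≤ _ := hZ
  have hmB : Nat.card B * Nat.card B ≤ Nat.card A * Nat.card B :=
    calc _ ≤ cdMeasure B := Nat.mul_le_mul_left _ (card_le_of_le hB)
      _ ≤ _ := cdMeasure_top (G := G) ▸ hG B
      _ ≤ _ := hZ
  have hAB_card : Nat.card A = Nat.card B := by
    nlinarith [Nat.card_pos (α := A), Nat.card_pos (α := B)]
  intro K
  calc cdMeasure K ≤ Nat.card G * Nat.card (center G) := cdMeasure_top (G := G) ▸ hG K
    _ ≤ Nat.card A * Nat.card A := hAB_card ▸ hZ
    _ ≤ cdMeasure A := Nat.mul_le_mul_left _ (card_le_of_le hA)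

lemma center_eq_bot_of_bot_mem_CD (h : (⊥ : Subgroup G) ∈ CD G) : center G = ⊥ := by
  have h_center := h (center G)
  rw [cdMeasure, centralizer_center, card_top, cdMeasure_bot] at h_center
  exact eq_bot_of_card_le _ (by simpa using h_center)

end CD

theorem isNilpotent_of_top_mem_CD {G : Type*} [instG : Group G] [Finite G]
    (hG : (⊤ : Subgroup G) ∈ CD G) {A B : Subgroup G}
    (hA : A ≤ centralizer (A : Set G)) (hB : B ≤ centralizer (B : Set G))
    (hAB : (A : Set G) * (B : Set G) = Set.univ) : Group.IsNilpotent G := by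
  induction G using Finite.induction_subsingleton_or_nontrivial generalizing instG with
  | hbase => infer_instance
  | hstep G ih =>
    by_cases hZ : center G = ⊤
    · exact ⟨1, by rw [Subgroup.upperCentralSeries_one, hZ]⟩
    have h_factor : ∀ {A B : Subgroup G}, A ≤ centralizer (A : Set G) →
        B ≤ centralizer (B : Set G) → (A : Set G) * (B : Set G) = Set.univ →
        ∃ N : Subgroup G, N.Normal ∧ A ≤ N ∧ Group.IsNilpotent N := by
      intro A B hA hB hAB
      have hA' := sup_center_le_centralizer hA
      have hB' := sup_center_le_centralizer hB
      have hAB' : ((A ⊔ center G : Subgroup G) : Set G) * ((B ⊔ center G : Subgroup G) : Set G) =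
          Set.univ :=
        Set.eq_univ_of_univ_subset (hAB ▸ Set.mul_subset_mul
          (SetLike.coe_subset_coe.mpr le_sup_left) (SetLike.coe_subset_coe.mpr le_sup_left))
      have hA_top : A ⊔ center G ≠ ⊤ := fun h => hZ (top_le_iff.mp (by
        simpa [h, centralizer_univ] using hA'))
      obtain ⟨N, hN_normal, hAN, hN_top, hN⟩ := exists_normal_mem_CD_of_le
        (mem_CD_of_mul_eq_univ hG hA' hB' le_sup_right le_sup_right hAB') hA_top
      have hN_card : Nat.card N < Nat.card G :=
        (card_le_of_le le_top).trans_eq card_top |>.lt_of_ne (mt (card_eq_iff_eq_top N).mp hN_top)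
      exact ⟨N, hN_normal, le_sup_left.trans hAN, ih N hN_card (top_mem_CD_of_mem_CD hN)
        (subgroupOf_le_centralizer hA') (subgroupOf_le_centralizer hB')
        (subgroupOf_mul_subgroupOf_eq_univ hAB' hAN)⟩
    obtain ⟨N, hN_normal, hAN, hN⟩ := h_factor hA hB hAB
    obtain ⟨M, hM_normal, hBM, hM⟩ := h_factor hB hA (mul_eq_univ_symm hAB)
    refine isNilpotent_of_sup_eq_top hN hM (eq_top_iff.mpr fun x _ => ?_)
    obtain ⟨a, ha, b, hb, rfl⟩ := hAB.symm ▸ Set.mem_univ x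
    exact mul_mem_sup (hAN ha) (hBM hb)

theorem stmt9 {G : Type*} [Group G] [Fintype G] (hbot : (⊥ : Subgroup G) ∈ CD G)
    (A B : Subgroup G)
    (hA : ∀ x ∈ A, ∀ y ∈ A, Commute x y) (hB : ∀ x ∈ B, ∀ y ∈ B, Commute x y)
    (hprod : (A : Set G) * (B : Set G) = Set.univ) :
    ∀ g : G, g = 1 := by
  have hZ : center G = ⊥ := center_eq_bot_of_bot_mem_CD hbot
  have hG : (⊤ : Subgroup G) ∈ CD G := fun K => by
    rw [cdMeasure_top, hZ, card_bot, mul_one, ← cdMeasure_bot]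
    exact hbot K
  have : Group.IsNilpotent G := isNilpotent_of_top_mem_CD hG
    (fun x hx y hy => (hA y hy x hx).eq) (fun x hx y hy => (hB y hy x hx).eq) hprod
  have : Subsingleton G := by
    by_contra h
    rw [not_subsingleton_iff_nontrivial] at h
    exact Group.IsNilpotent.center_ne_bot G hZ
  exact fun g => Subsingleton.elim g 1
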